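/- arXiv:2101.07176 — 2 statements merged into one kernel-verified Lean document; each statement's English description precedes it below -/
import Mathlib

section
/- Let n be an odd perfect number, let p be a prime with p^a the exact power of p dividing n (so p^a ∣ n and p^(a+1) ∤ n), and suppose σ(p^a) is even, say σ(p^a) = 2S. Then S is odd, S > 1, and S divides n / p^a. -/
/-- The sum of divisors of a natural number. -/
def sigma (n : ℕ) : ℕ := ∑ d ∈ n.divisors, d

lemma sigma_eq_sigma1 (n : ℕ) : sigma n = ArithmeticFunction.sigma 1 n := by
  rw [ArithmeticFunction.sigma_one_apply]; rfl

/-- For an odd perfect `n` and a prime `p` with `p^a` the exact power of `p`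
dividing `n`, if `σ(p^a) = 2S` then `S` is odd, `S > 1`, and `S ∣ n / p^a`. -/
theorem odd_perfect_special_S (n p a S : ℕ) (hodd : Odd n) (hperf : Nat.Perfect n)
    (hp : Nat.Prime p) (hdvd : p ^ a ∣ n) (hndvd : ¬ p ^ (a + 1) ∣ n)
    (hS : sigma (p ^ a) = 2 * S) :
    Odd S ∧ 1 < S ∧ S ∣ n / p ^ a := by
  have hn0 : 0 < n := hperf.2
  have ha : 1 ≤ a := by
    by_contra h
    interval_cases a
    simp [sigma] at hS
    omega
  have hpn : p ∣ n := dvd_trans (dvd_pow_self p (by omega)) hdvd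
  have hp2 : p ≠ 2 := by
    rintro rfl
    exact (Nat.not_even_iff_odd.mpr hodd) (even_iff_two_dvd.mpr hpn)
  have hp3 : 3 ≤ p := by
    rcases hp.two_le.lt_or_eq with h | h
    · omega
    · omega
  -- sigma (p^a) as geometric sum
  have hgeo : sigma (p ^ a) = ∑ k ∈ Finset.range (a + 1), p ^ k := by
    rw [sigma_eq_sigma1, ArithmeticFunction.sigma_one_apply_prime_pow hp]
  -- lower bound : sigma (p^a) ≥ 1 + p
  have hlb : 1 + p ≤ sigma (p ^ a) := by
    rw [hgeo]
    calc 1 + p = ∑ k ∈ Finset.range 2, p ^ k := by simp [Finset.sum_range_succ]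
    _ ≤ ∑ k ∈ Finset.range (a + 1), p ^ k := by
        apply Finset.sum_le_sum_of_subset
        apply Finset.range_subset_range.mpr
        omega
  -- p does not divide sigma (p^a)
  have hpns : ¬ p ∣ sigma (p ^ a) := by
    rw [hgeo, geom_sum_succ]
    intro h
    have h1 : p ∣ 1 := (Nat.dvd_add_right ⟨_, rfl⟩).mp h
    have := Nat.le_of_dvd one_pos h1
    omega
  set m := n / p ^ a with hm
  have hnm : n = p ^ a * m := (Nat.mul_div_cancel' hdvd).symm
  have hpm : ¬ p ∣ m := by
    intro hpm'
    apply hndvd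
    rw [hnm, pow_succ]
    exact Nat.mul_dvd_mul_left (p ^ a) hpm'
  have hcop : Nat.Coprime (p ^ a) m :=
    Nat.Coprime.pow_left _ ((Nat.Prime.coprime_iff_not_dvd hp).mpr hpm)
  have hsig : sigma n = sigma (p ^ a) * sigma m := by
    rw [hnm]; exact Nat.Coprime.sum_divisors_mul hcop
  have hperf' : sigma n = 2 * n := by
    have := (Nat.perfect_iff_sum_divisors_eq_two_mul hn0).mp hperf
    simpa [sigma] using this
  have hkey : n = S * sigma m := by
    have h2 : 2 * n = 2 * (S * sigma m) := by rw [← hperf', hsig, hS, mul_assoc]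
    omega
  have hSn : S ∣ n := ⟨sigma m, hkey⟩
  have hSodd : Odd S := by
    rcases Nat.even_or_odd S with h | h
    · exact absurd (even_iff_two_dvd.mpr ((even_iff_two_dvd.mp h).trans hSn))
        (Nat.not_even_iff_odd.mpr hodd)
    · exact h
  have hS1 : 1 < S := by omega
  have hpS : ¬ p ∣ S := fun h => hpns (hS ▸ Dvd.dvd.mul_left h 2)
  have hcopS : Nat.Coprime S (p ^ a) :=
    Nat.Coprime.pow_right _ ((hp.coprime_iff_not_dvd).mpr hpS).symm
  refine ⟨hSodd, hS1, ?_⟩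
  exact hcopS.dvd_of_dvd_mul_left (hnm ▸ hSn)
end

section
/- An odd perfect number has at least three distinct prime factors; that is, if n is odd and σ(n) = 2n, then the number of distinct primes dividing n is at least 3. -/
lemma geom_aux (p : ℕ) (hp : 2 ≤ p) (m : ℕ) :
    (∑ k ∈ Finset.range m, p ^ k) * (p - 1) + 1 = p ^ m := by
  induction m with
  | zero => simp
  | succ m ih =>
    rw [Finset.sum_range_succ, add_mul, pow_succ]
    have h2 : p ^ m * (p - 1) + p ^ m = p ^ m * p := by
      rw [Nat.mul_sub, mul_one]
      have : p ^ m ≤ p ^ m * p := Nat.le_mul_of_pos_right _ (by omega)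
      omega
    omega

lemma key (n : ℕ) (hn : 1 < n) :
    sigma n * ∏ p ∈ n.primeFactors, (p - 1) < n * ∏ p ∈ n.primeFactors, p := by
  have hn0 : n ≠ 0 := by omega
  have hs : sigma n = ∏ p ∈ n.primeFactors,
      ∑ k ∈ Finset.range (n.factorization p + 1), p ^ k := Nat.sum_divisors hn0
  have hfact : (∏ p ∈ n.primeFactors, p ^ (n.factorization p)) = n := by
    have := Nat.factorization_prod_pow_eq_self hn0
    rwa [Finsupp.prod, Nat.support_factorization] at this
  have hne : n.primeFactors.Nonempty :=
    (Nat.nonempty_primeFactors).2 hn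
  calc sigma n * ∏ p ∈ n.primeFactors, (p - 1)
      = ∏ p ∈ n.primeFactors,
        ((∑ k ∈ Finset.range (n.factorization p + 1), p ^ k) * (p - 1)) := by
        rw [hs, ← Finset.prod_mul_distrib]
    _ < ∏ p ∈ n.primeFactors, p ^ (n.factorization p + 1) := by
        apply Finset.prod_lt_prod_of_nonempty
          (f := fun p => (∑ k ∈ Finset.range (n.factorization p + 1), p ^ k) * (p - 1))
          (g := fun p => p ^ (n.factorization p + 1))
        · intro p hp
          have hp2 : 2 ≤ p := (Nat.prime_of_mem_primeFactors hp).two_le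
          have := geom_aux p hp2 (n.factorization p + 1)
          have hpow : p ≤ p ^ (n.factorization p + 1) := Nat.le_self_pow (by omega) p
          omega
        · intro p hp
          have hp2 : 2 ≤ p := (Nat.prime_of_mem_primeFactors hp).two_le
          have := geom_aux p hp2 (n.factorization p + 1)
          omega
        · exact hne
    _ = n * ∏ p ∈ n.primeFactors, p := by
        have h2 : ∏ p ∈ n.primeFactors, p ^ (n.factorization p + 1)
            = (∏ p ∈ n.primeFactors, p ^ (n.factorization p)) * ∏ p ∈ n.primeFactors, p := by
          rw [← Finset.prod_mul_distrib]
          exact Finset.prod_congr rfl fun p _ => pow_succ p _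
        rw [h2, hfact]

/-- An odd perfect number has at least three distinct prime factors. -/
theorem odd_perfect_three_primes (n : ℕ) (hodd : Odd n) (hperf : sigma n = 2 * n) :
    3 ≤ n.primeFactors.card := by
  have hn0 : n ≠ 0 := by rintro rfl; simp at hodd
  have hn1 : n ≠ 1 := by rintro rfl; simp [sigma] at hperf
  have hn : 1 < n := by omega
  have hk := key n hn
  rw [hperf] at hk
  have hlt : 2 * ∏ p ∈ n.primeFactors, (p - 1) < ∏ p ∈ n.primeFactors, p := by
    have := Nat.lt_of_mul_lt_mul_left (a := n) (by
      calc n * (2 * ∏ p ∈ n.primeFactors, (p - 1))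
          = 2 * n * ∏ p ∈ n.primeFactors, (p - 1) := by ring
        _ < n * ∏ p ∈ n.primeFactors, p := hk)
    exact this
  by_contra hcard
  push_neg at hcard
  interval_cases h : n.primeFactors.card
  · -- card 0
    rw [Finset.card_eq_zero] at h
    simp [h] at hlt
  · -- card 1
    obtain ⟨p, hp⟩ := Finset.card_eq_one.1 h
    have hpmem : p ∈ n.primeFactors := by simp [hp]
    have hpodd : p ≠ 2 := by
      intro h2
      have := Nat.dvd_of_mem_primeFactors hpmem
      rw [h2] at this
      exact (Nat.not_even_iff_odd.2 hodd) (even_iff_two_dvd.2 this)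
    have hp3 : 3 ≤ p := by
      have := (Nat.prime_of_mem_primeFactors hpmem).two_le
      omega
    rw [hp] at hlt
    simp at hlt
    omega
  · -- card 2
    obtain ⟨p, q, hpq, hset⟩ := Finset.card_eq_two.1 h
    have hpmem : p ∈ n.primeFactors := by simp [hset]
    have hqmem : q ∈ n.primeFactors := by simp [hset]
    have hodd' : ∀ r ∈ n.primeFactors, 3 ≤ r := by
      intro r hr
      have h2 := (Nat.prime_of_mem_primeFactors hr).two_le
      rcases Nat.lt_or_ge r 3 with h3 | h3
      · have : r = 2 := by omega
        subst this
        exact absurd ((Nat.not_even_iff_odd.2 hodd) (even_iff_two_dvd.2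
          (Nat.dvd_of_mem_primeFactors hr))) (fun x => x)
      · exact h3
    have hp3 : 3 ≤ p := hodd' p hpmem
    have hq3 : 3 ≤ q := hodd' q hqmem
    -- one of them is ≥ 5: both odd primes, distinct
    have hpo : Odd p := (Nat.prime_of_mem_primeFactors hpmem).odd_of_ne_two (by omega)
    have hqo : Odd q := (Nat.prime_of_mem_primeFactors hqmem).odd_of_ne_two (by omega)
    rw [hset] at hlt
    rw [Finset.prod_insert (by simp [hpq]), Finset.prod_singleton,
        Finset.prod_insert (by simp [hpq]), Finset.prod_singleton] at hlt
    obtain ⟨a, ha⟩ := hpo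
    obtain ⟨b, hb⟩ := hqo
    subst ha hb
    have hab : a ≠ b := by omega
    have ha1 : 1 ≤ a := by omega
    have hb1 : 1 ≤ b := by omega
    have e1 : 2 * a + 1 - 1 = 2 * a := by omega
    have e2 : 2 * b + 1 - 1 = 2 * b := by omega
    rw [e1, e2] at hlt
    rcases lt_or_gt_of_ne hab with hab' | hab'
    · have h1 : 1 * b ≤ a * b := Nat.mul_le_mul ha1 (le_refl b)
      have h2 : a * 2 ≤ a * b := Nat.mul_le_mul (le_refl a) (by omega)
      nlinarith [hlt, h1, h2]
    · have h1 : 1 * a ≤ b * a := Nat.mul_le_mul hb1 (le_refl a)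
      have h2 : b * 2 ≤ b * a := Nat.mul_le_mul (le_refl b) (by omega)
      nlinarith [hlt, h1, h2]
end
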